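/- Let M be an n-dimensional 𝒯_a-Ricci-semisymmetric (N(k),ξ)-semi-Riemannian manifold. Then ε a₅ S²(X,Y) = E S(X,Y) + F g(X,Y) + G η(X)η(Y) for all vector fields X,Y, where S²(X,Y) = S(QX,Y), E = ε(k a₀ + a₇ r − k(n−1)a₁ − k(n−1)a₂), F = −ε k(n−1)(k a₀ + k(n−1)a₄ + a₇ r), and G = −k²(n−1)²(a₁+a₂+2a₃+a₄+a₅+2a₆). In particular, if a₅ = 0 and E ≠ 0, then M is an η-Einstein manifold. -/

import Mathlib

open Finset

/-- An algebraic (pointwise) model of an `n`-dimensional semi-Riemannian manifold: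
a real vector space of tangent vectors together with a metric `g`, an orthonormal
frame `e` with signs `eps`, and a Riemann curvature tensor `R` satisfying the
standard curvature symmetries.  The Ricci tensor `S`, the Ricci operator `Q` and
the scalar curvature `r` are obtained by tracing with respect to the frame. -/
structure SemiRiemannian (n : ℕ) where
  V : Type
  [instAddCommGroup : AddCommGroup V]
  [instModule : Module ℝ V]
  g : V → V → ℝ
  g_symm : ∀ X Y, g X Y = g Y X
  g_add_left : ∀ X Y Z, g (X + Y) Z = g X Z + g Y Z
  g_smul_left : ∀ (c : ℝ) (X Y : V), g (c • X) Y = c * g X Y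
  e : Fin n → V
  eps : Fin n → ℝ
  eps_unit : ∀ i, eps i = 1 ∨ eps i = -1
  g_frame : ∀ i j, g (e i) (e j) = if i = j then eps i else 0
  expand : ∀ X : V, X = ∑ i, (eps i * g X (e i)) • e i
  R : V → V → V → V
  R_add₁ : ∀ X X' Y Z, R (X + X') Y Z = R X Y Z + R X' Y Z
  R_smul₁ : ∀ (c : ℝ) (X Y Z : V), R (c • X) Y Z = c • R X Y Z
  R_add₂ : ∀ X Y Y' Z, R X (Y + Y') Z = R X Y Z + R X Y' Z
  R_smul₂ : ∀ (c : ℝ) (X Y Z : V), R X (c • Y) Z = c • R X Y Z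
  R_add₃ : ∀ X Y Z Z', R X Y (Z + Z') = R X Y Z + R X Y Z'
  R_smul₃ : ∀ (c : ℝ) (X Y Z : V), R X Y (c • Z) = c • R X Y Z
  R_alt : ∀ X Y Z, R X Y Z = - R Y X Z
  R_skew : ∀ X Y Z W, g (R X Y Z) W = - (g (R X Y W) Z)
  R_pair : ∀ X Y Z W, g (R X Y Z) W = g (R Z W X) Y
  R_bianchi : ∀ X Y Z, R X Y Z + R Y Z X + R Z X Y = 0

attribute [instance] SemiRiemannian.instAddCommGroup SemiRiemannian.instModule

namespace SemiRiemannian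

variable {n : ℕ} (M : SemiRiemannian n)

/-- The Ricci tensor `S`. -/
def S (X Y : M.V) : ℝ := ∑ i, M.eps i * M.g (M.R (M.e i) X Y) (M.e i)

/-- The Ricci operator `Q`, characterised by `g (Q X) Y = S X Y`. -/
def Q (X : M.V) : M.V := ∑ i, (M.eps i * M.S X (M.e i)) • M.e i

/-- The scalar curvature `r`. -/
def r : ℝ := ∑ i, M.eps i * M.S (M.e i) (M.e i)

/-- The `𝒯`-curvature tensor with coefficients `a₀, …, a₇`:
`𝒯(X,Y)Z = a₀ R(X,Y)Z + a₁ S(Y,Z)X + a₂ S(X,Z)Y + a₃ S(X,Y)Z + a₄ g(Y,Z)QX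
  + a₅ g(X,Z)QY + a₆ g(X,Y)QZ + a₇ r (g(Y,Z)X − g(X,Z)Y)`. -/
def T (a₀ a₁ a₂ a₃ a₄ a₅ a₆ a₇ : ℝ) (X Y Z : M.V) : M.V :=
  a₀ • M.R X Y Z + (a₁ * M.S Y Z) • X + (a₂ * M.S X Z) • Y + (a₃ * M.S X Y) • Z
    + (a₄ * M.g Y Z) • M.Q X + (a₅ * M.g X Z) • M.Q Y + (a₆ * M.g X Y) • M.Q Z
    + (a₇ * M.r) • (M.g Y Z • X - M.g X Z • Y)

/-- The Ricci tensor `S_𝒯` of the `𝒯`-curvature tensor. -/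
def ST (a₀ a₁ a₂ a₃ a₄ a₅ a₆ a₇ : ℝ) (X Y : M.V) : ℝ :=
  (a₀ + (n : ℝ) * a₁ + a₂ + a₃ + a₅ + a₆) * M.S X Y
    + (a₄ + ((n : ℝ) - 1) * a₇) * M.r * M.g X Y

/-- `ξ` belongs to the `k`-nullity distribution `N(k)`:
`R(X,Y)ξ = k (g(Y,ξ)X − g(X,ξ)Y)`. -/
def Nullity (k : ℝ) (ξ : M.V) : Prop :=
  ∀ X Y : M.V, M.R X Y ξ = k • (M.g Y ξ • X - M.g X ξ • Y)

/-- `𝒯_a`-semisymmetry: `R(X,Y) ⬝ 𝒯_a = 0`, where `R(X,Y)` acts as a derivation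
on the `(1,3)`-tensor `𝒯_a`. -/
def TSemisymmetric (a₀ a₁ a₂ a₃ a₄ a₅ a₆ a₇ : ℝ) : Prop :=
  ∀ X Y U V W : M.V,
    M.R X Y (M.T a₀ a₁ a₂ a₃ a₄ a₅ a₆ a₇ U V W)
      - M.T a₀ a₁ a₂ a₃ a₄ a₅ a₆ a₇ (M.R X Y U) V W
      - M.T a₀ a₁ a₂ a₃ a₄ a₅ a₆ a₇ U (M.R X Y V) W
      - M.T a₀ a₁ a₂ a₃ a₄ a₅ a₆ a₇ U V (M.R X Y W) = 0

end SemiRiemannian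

/-!
Put `X = ξ` and `V = ξ` in the Ricci-semisymmetry condition
`S(𝒯(X,Y)U, V) + S(U, 𝒯(X,Y)V) = 0`. Since `ξ` lies in the `k`-nullity distribution,
`R(ξ,Y)U = k (g(Y,U) ξ - g(U,ξ) Y)`, `S(U,ξ) = k(n-1) g(U,ξ)` and `Qξ = k(n-1) ξ`, so every term
except `a₅ g(ξ,ξ) S(U,QY)` collapses to a combination of `S(U,Y)`, `g(U,Y)` and `g(U,ξ) g(Y,ξ)`;
as `g(ξ,ξ) = ε` and `ε² = 1`, the resulting identity is the claimed one.
-/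

namespace SemiRiemannian

variable {n : ℕ} (M : SemiRiemannian n)

lemma g_neg_left (X Y : M.V) : M.g (-X) Y = -M.g X Y := by
  simpa using M.g_smul_left (-1) X Y

lemma g_sub_left (X Y Z : M.V) : M.g (X - Y) Z = M.g X Z - M.g Y Z := by
  rw [sub_eq_add_neg, M.g_add_left, g_neg_left, ← sub_eq_add_neg]

lemma g_sum_left {ι : Type*} (s : Finset ι) (f : ι → M.V) (Y : M.V) :
    M.g (∑ i ∈ s, f i) Y = ∑ i ∈ s, M.g (f i) Y :=
  map_sum (AddMonoidHom.mk' (M.g · Y) fun X X' => M.g_add_left X X' Y) f s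

lemma eq_of_forall_g_frame {X Y : M.V} (h : ∀ i, M.g X (M.e i) = M.g Y (M.e i)) : X = Y := by
  rw [M.expand X, M.expand Y]
  simp only [h]

lemma g_eq_sum_frame (X Y : M.V) :
    M.g X Y = ∑ i, M.eps i * M.g X (M.e i) * M.g Y (M.e i) := by
  conv_lhs => rw [M.expand X]
  rw [g_sum_left]
  exact Finset.sum_congr rfl fun i _ => by rw [M.g_smul_left, M.g_symm (M.e i)]

lemma S_add_right (X Y Y' : M.V) : M.S X (Y + Y') = M.S X Y + M.S X Y' := by
  simp only [S, M.R_add₃, M.g_add_left, mul_add, Finset.sum_add_distrib]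

lemma S_smul_right (c : ℝ) (X Y : M.V) : M.S X (c • Y) = c * M.S X Y := by
  simp only [S, M.R_smul₃, M.g_smul_left, Finset.mul_sum]
  exact Finset.sum_congr rfl fun i _ => by ring

lemma S_symm (X Y : M.V) : M.S X Y = M.S Y X := by
  refine Finset.sum_congr rfl fun i _ => ?_
  rw [M.R_pair, M.R_alt, g_neg_left, M.R_skew, neg_neg, M.g_symm]

lemma S_add_left (X X' Y : M.V) : M.S (X + X') Y = M.S X Y + M.S X' Y := by
  rw [S_symm, S_add_right, S_symm, M.S_symm Y]

lemma S_smul_left (c : ℝ) (X Y : M.V) : M.S (c • X) Y = c * M.S X Y := by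
  rw [S_symm, S_smul_right, S_symm]

lemma S_neg_left (X Y : M.V) : M.S (-X) Y = -M.S X Y := by
  simpa using M.S_smul_left (-1) X Y

lemma S_sub_left (X X' Y : M.V) : M.S (X - X') Y = M.S X Y - M.S X' Y := by
  rw [sub_eq_add_neg, S_add_left, S_neg_left, ← sub_eq_add_neg]

lemma S_sub_right (X Y Y' : M.V) : M.S X (Y - Y') = M.S X Y - M.S X Y' := by
  rw [S_symm, S_sub_left, S_symm, M.S_symm Y']

lemma S_sum_right {ι : Type*} (s : Finset ι) (X : M.V) (f : ι → M.V) :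
    M.S X (∑ i ∈ s, f i) = ∑ i ∈ s, M.S X (f i) :=
  map_sum (AddMonoidHom.mk' (M.S X) (M.S_add_right X)) f s

lemma g_Q_left (X Y : M.V) : M.g (M.Q X) Y = M.S X Y := by
  conv_rhs => rw [M.expand Y, S_sum_right]
  rw [Q, g_sum_left]
  refine Finset.sum_congr rfl fun i _ => ?_
  rw [M.g_smul_left, S_smul_right, M.g_symm]
  ring

lemma S_Q_left (X Y : M.V) : M.S (M.Q X) Y = M.S X (M.Q Y) := by
  rw [S_symm, ← g_Q_left, M.g_symm, g_Q_left]

lemma eps_mul_self (i : Fin n) : M.eps i * M.eps i = 1 := by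
  rcases M.eps_unit i with h | h <;> norm_num [h]

namespace Nullity

variable {M} {k : ℝ} {ξ : M.V}

lemma S_right (hk : M.Nullity k ξ) (X : M.V) :
    M.S X ξ = k * ((n : ℝ) - 1) * M.g X ξ := by
  have term (i : Fin n) : M.eps i * M.g (M.R (M.e i) X ξ) (M.e i)
      = k * M.g X ξ - k * (M.eps i * M.g X (M.e i) * M.g ξ (M.e i)) := by
    rw [hk, M.g_smul_left, g_sub_left, M.g_smul_left, M.g_smul_left, M.g_frame, if_pos rfl,
      M.g_symm (M.e i)]
    linear_combination k * M.g X ξ * M.eps_mul_self i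
  rw [S, Finset.sum_congr rfl fun i _ => term i, Finset.sum_sub_distrib, Finset.sum_const,
    Finset.card_univ, Fintype.card_fin, nsmul_eq_mul, ← Finset.mul_sum, ← g_eq_sum_frame]
  ring

lemma S_left (hk : M.Nullity k ξ) (X : M.V) :
    M.S ξ X = k * ((n : ℝ) - 1) * M.g X ξ := by
  rw [S_symm, hk.S_right]

lemma R_left (hk : M.Nullity k ξ) (Y U : M.V) :
    M.R ξ Y U = k • (M.g Y U • ξ - M.g U ξ • Y) := by
  refine M.eq_of_forall_g_frame fun i => ?_
  rw [M.R_pair, hk]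
  simp only [M.g_smul_left, g_sub_left]
  rw [M.g_symm (M.e i), M.g_symm (M.e i), M.g_symm U]
  ring

lemma Q_eq (hk : M.Nullity k ξ) : M.Q ξ = (k * ((n : ℝ) - 1)) • ξ := by
  refine M.eq_of_forall_g_frame fun i => ?_
  rw [g_Q_left, M.g_smul_left, hk.S_left, M.g_symm]

variable (a₀ a₁ a₂ a₃ a₄ a₅ a₆ a₇ : ℝ)

lemma S_T_xi_left (hk : M.Nullity k ξ) (X Y : M.V) :
    M.S (M.T a₀ a₁ a₂ a₃ a₄ a₅ a₆ a₇ ξ Y X) ξ = k * ((n : ℝ) - 1) *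
      (M.g ξ ξ * a₁ * M.S X Y
        + M.g ξ ξ * (k * a₀ + k * ((n : ℝ) - 1) * a₄ + a₇ * M.r) * M.g X Y
        + (k * ((n : ℝ) - 1) * (a₂ + a₃ + a₅ + a₆) - k * a₀ - a₇ * M.r) * M.g X ξ * M.g Y ξ) := by
  simp only [T, hk.R_left, hk.Q_eq, hk.S_right, hk.S_left, M.g_add_left, g_sub_left,
    M.g_smul_left, g_Q_left, M.S_symm Y X, M.g_symm Y X, M.g_symm ξ]
  ring

lemma S_T_xi_right (hk : M.Nullity k ξ) (X Y : M.V) :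
    M.S X (M.T a₀ a₁ a₂ a₃ a₄ a₅ a₆ a₇ ξ Y ξ) = M.g ξ ξ * a₅ * M.S X (M.Q Y)
      + M.g ξ ξ * (k * ((n : ℝ) - 1) * a₂ - k * a₀ - a₇ * M.r) * M.S X Y
      + k * ((n : ℝ) - 1) * (k * a₀ + a₇ * M.r + k * ((n : ℝ) - 1) * (a₁ + a₃ + a₄ + a₆))
        * M.g X ξ * M.g Y ξ := by
  simp only [T, hk.R_left, hk.Q_eq, S_add_right, S_sub_right, S_smul_right, hk.S_right,
    hk.S_left, M.g_symm ξ]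
  ring

end Nullity

end SemiRiemannian

/-- Theorem 7.5: on a `𝒯_a`-Ricci-semisymmetric
`(N(k),ξ)`-semi-Riemannian manifold, `ε a₅ S² = E S + F g + G η⊗η`; in
particular if `a₅ = 0 ≠ E` then `M` is `η`-Einstein. -/
theorem Ta_Ricci_semisymmetric
    (n : ℕ) (M : SemiRiemannian n) (k ε : ℝ) (ξ : M.V) (η : M.V → ℝ)
    (hε : ε = 1 ∨ ε = -1) (hξ : M.g ξ ξ = ε)
    (hη : ∀ X : M.V, η X = ε * M.g X ξ)
    (hk : M.Nullity k ξ)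
    (a₀ a₁ a₂ a₃ a₄ a₅ a₆ a₇ : ℝ)
    (hsemi : ∀ X Y U V : M.V,
      M.S (M.T a₀ a₁ a₂ a₃ a₄ a₅ a₆ a₇ X Y U) V + M.S U (M.T a₀ a₁ a₂ a₃ a₄ a₅ a₆ a₇ X Y V) = 0)
    (E F G : ℝ)
    (hE : E = ε * (k * a₀ + a₇ * M.r - k * ((n : ℝ) - 1) * a₁ - k * ((n : ℝ) - 1) * a₂))
    (hF : F = -(ε * k * ((n : ℝ) - 1) * (k * a₀ + k * ((n : ℝ) - 1) * a₄ + a₇ * M.r)))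
    (hG : G = -(k^2 * ((n : ℝ) - 1)^2 * (a₁ + a₂ + 2*a₃ + a₄ + a₅ + 2*a₆))) :
    (∀ X Y : M.V,
      ε * a₅ * M.S (M.Q X) Y = E * M.S X Y + F * M.g X Y + G * η X * η Y)
    ∧ (a₅ = 0 → E ≠ 0 →
        ∃ α β : ℝ, ∀ X Y : M.V, M.S X Y = α * M.g X Y + β * η X * η Y) := by
  have hε_sq : ε * ε = 1 := by rcases hε with rfl | rfl <;> norm_num
  have identity (X Y : M.V) :
      ε * a₅ * M.S (M.Q X) Y = E * M.S X Y + F * M.g X Y + G * η X * η Y := by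
    have key := hsemi ξ Y X ξ
    rw [hk.S_T_xi_left, hk.S_T_xi_right, hξ] at key
    rw [hη, hη, hE, hF, hG, M.S_Q_left]
    linear_combination key + k ^ 2 * ((n : ℝ) - 1) ^ 2 * (a₁ + a₂ + 2 * a₃ + a₄ + a₅ + 2 * a₆)
      * M.g X ξ * M.g Y ξ * hε_sq
  refine ⟨identity, fun ha₅ hE₀ => ⟨-F / E, -G / E, fun X Y => ?_⟩⟩
  have h := identity X Y
  rw [ha₅] at h
  field_simp
  linear_combination -h
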